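/- arXiv:1202.1347 — 3 statements merged into one kernel-verified Lean document; each statement's English description precedes it below -/
import Mathlib

section
/- Let K be a compact operator on a Hilbert space H such that I + K is invertible, and let P_n be the orthogonal projection onto the first n basis vectors of an orthonormal basis. Then there exist constants C > 0 and n_0 such that for all n ≥ n_0, the finite section A_n = P_n(I+K)P_n (viewed as an operator on the range of P_n) is invertible and ‖A_n‖ ≤ C and ‖A_n^{-1}‖ ≤ C. -/
/-! Since `K` is compact and `P_n → I` strongly with `‖P_n‖ ≤ 1`, the convergence `P_n K x → K x`
is uniform on the unit ball (Arzelà–Ascoli on a compact set containing its image under `K`), so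
`‖K - P_n K‖ → 0`. For `v` in the range of `P_n` we have `(I + K) v = A_n v + (K - P_n K) v`, hence
`‖v‖ ≤ ‖(I + K)⁻¹‖ (‖A_n v‖ + ‖K - P_n K‖ ‖v‖)`, that is `‖v‖ ≤ 2 ‖(I + K)⁻¹‖ ‖A_n v‖` for large `n`.
Such a lower bound makes the operator `A_n` on the finite-dimensional range of `P_n` invertible
with `‖A_n⁻¹‖ ≤ 2 ‖(I + K)⁻¹‖`, while `‖A_n‖ ≤ ‖I + K‖`. -/

open Filter

variable {H : Type*} [NormedAddCommGroup H] [InnerProductSpace ℂ H] [CompleteSpace H]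

noncomputable def firstNSpan (e : HilbertBasis ℕ ℂ H) (n : ℕ) : Submodule ℂ H :=
  Submodule.span ℂ ((fun i => e i) '' Set.Iio n)

instance (e : HilbertBasis ℕ ℂ H) (n : ℕ) : FiniteDimensional ℂ (firstNSpan e n) :=
  FiniteDimensional.span_of_finite ℂ ((Set.finite_Iio n).image _)

/-- The finite section `A_n = P_n (I + K) P_n`, viewed as an operator on the range of
`P_n`, i.e. on the span of the first `n` basis vectors. -/
noncomputable def finiteSection (e : HilbertBasis ℕ ℂ H) (K : H →L[ℂ] H) (n : ℕ) :
    firstNSpan e n →L[ℂ] firstNSpan e n :=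
  ((firstNSpan e n).orthogonalProjectionOnto).comp ((1 + K).comp (firstNSpan e n).subtypeL)

open Topology Set NNReal

theorem tendstoUniformlyOn_of_tendsto_of_lipschitzWith {ι α β : Type*} [PseudoMetricSpace α]
    [PseudoMetricSpace β] {F : ι → α → β} {f : α → β} {p : Filter ι} {S : Set α}
    (hS : IsCompact S) {C : ℝ≥0} (hF : ∀ i, LipschitzWith C (F i))
    (h : ∀ x, Tendsto (fun i => F i x) p (𝓝 (f x))) : TendstoUniformlyOn F f p S := by
  have hequi : ∀ s ∈ ({S} : Set (Set α)), EquicontinuousOn F s := fun s _ =>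
    (LipschitzWith.uniformEquicontinuous F C hF).equicontinuous.equicontinuousOn s
  have := (EquicontinuousOn.tendsto_uniformOnFun_iff_pi' (by simpa using hS) hequi p f).2
    (tendsto_pi_nhds.2 fun x => h x)
  exact UniformOnFun.tendsto_iff_tendstoUniformlyOn.1 this S rfl

theorem IsCompactOperator.tendsto_comp_of_tendsto_apply {ι 𝕜 E F G : Type*} [RCLike 𝕜]
    [NormedAddCommGroup E] [NormedSpace 𝕜 E] [NormedAddCommGroup F] [NormedSpace 𝕜 F]
    [NormedAddCommGroup G] [NormedSpace 𝕜 G] {K : E →L[𝕜] F} (hK : IsCompactOperator K)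
    {T : ι → F →L[𝕜] G} {T₀ : F →L[𝕜] G} {p : Filter ι} {C : ℝ≥0} (hT : ∀ i, ‖T i‖₊ ≤ C)
    (h : ∀ y, Tendsto (fun i => T i y) p (𝓝 (T₀ y))) :
    Tendsto (fun i => T i ∘L K) p (𝓝 (T₀ ∘L K)) := by
  obtain ⟨M, hM, hKM⟩ := hK.image_closedBall_subset_compact 1
  have hunif := Metric.tendstoUniformlyOn_iff.1 <|
    tendstoUniformlyOn_of_tendsto_of_lipschitzWith hM (fun i => (T i).lipschitz.weaken (hT i)) h
  refine Metric.tendsto_nhds.2 fun ε hε => ?_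
  filter_upwards [hunif (ε / 2) (half_pos hε)] with i hi
  refine lt_of_le_of_lt ?_ (half_lt_self hε)
  rw [dist_eq_norm]
  refine ContinuousLinearMap.opNorm_le_of_unit_norm (half_pos hε).le fun x hx => ?_
  simpa [dist_eq_norm'] using (hi (K x) (hKM ⟨x, by simp [hx], rfl⟩)).le

section

omit [CompleteSpace H]

theorem firstNSpan_mono (e : HilbertBasis ℕ ℂ H) : Monotone (firstNSpan e) :=
  fun _ _ hmn => Submodule.span_mono (image_mono (Iio_subset_Iio hmn))

theorem iSup_firstNSpan (e : HilbertBasis ℕ ℂ H) :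
    ⨆ n, firstNSpan e n = Submodule.span ℂ (range e) := by
  simp only [firstNSpan, ← Submodule.span_iUnion, ← image_iUnion, iUnion_Iio, image_univ]

theorem tendsto_starProjection_firstNSpan (e : HilbertBasis ℕ ℂ H) (x : H) :
    Tendsto (fun n => (firstNSpan e n).starProjection x) atTop (𝓝 x) :=
  Submodule.starProjection_tendsto_self _ (firstNSpan_mono e) x
    (by rw [iSup_firstNSpan, e.dense_span])

theorem tendsto_starProjection_firstNSpan_comp (e : HilbertBasis ℕ ℂ H) {K : H →L[ℂ] H}
    (hK : IsCompactOperator K) :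
    Tendsto (fun n => (firstNSpan e n).starProjection ∘L K) atTop (𝓝 K) := by
  simpa using hK.tendsto_comp_of_tendsto_apply (T₀ := .id ℂ H) (C := 1)
    (fun n => (firstNSpan e n).starProjection_norm_le) (tendsto_starProjection_firstNSpan e)

end

namespace Submodule

variable {𝕜 E : Type*} [RCLike 𝕜] [NormedAddCommGroup E] [InnerProductSpace 𝕜 E]
  (U : Submodule 𝕜 E) [U.HasOrthogonalProjection]

noncomputable def compression (T : E →L[𝕜] E) : U →L[𝕜] U :=
  U.orthogonalProjectionOnto ∘L T ∘L U.subtypeL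

theorem norm_compression_le (T : E →L[𝕜] E) : ‖U.compression T‖ ≤ ‖T‖ :=
  ContinuousLinearMap.opNorm_le_bound _ (norm_nonneg T) fun v =>
    (U.norm_orthogonalProjectionOnto_apply_le _).trans (T.le_opNorm v)

theorem norm_le_two_mul_norm_compression_one_add_apply {K J : E →L[𝕜] E}
    (hJ : J.comp (1 + K) = 1) (hsmall : ‖J‖ * ‖K - U.starProjection ∘L K‖ ≤ 1 / 2) (v : U) :
    ‖v‖ ≤ 2 * ‖J‖ * ‖U.compression (1 + K) v‖ := by
  set A := U.compression (1 + K)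
  set δ := ‖K - U.starProjection ∘L K‖
  have hsplit : (1 + K) (v : E) = A v + (K - U.starProjection ∘L K) v := by
    simp [A, compression, U.orthogonalProjectionOnto_mem_subspace_eq_self v]
  have hJv : J ((1 + K) v) = v := by rw [← ContinuousLinearMap.comp_apply, hJ]; rfl
  have hbound : ‖(1 + K) (v : E)‖ ≤ ‖A v‖ + δ * ‖v‖ := by
    rw [hsplit]
    exact norm_add_le_of_le (U.norm_coe _).le ((K - U.starProjection ∘L K).le_opNorm v)
  have : ‖v‖ ≤ ‖J‖ * ‖A v‖ + ‖v‖ / 2 :=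
    calc ‖v‖ = ‖J ((1 + K) v)‖ := by rw [hJv, norm_coe]
      _ ≤ ‖J‖ * (‖A v‖ + δ * ‖v‖) := J.le_opNorm_of_le hbound
      _ = ‖J‖ * ‖A v‖ + (‖J‖ * δ) * ‖v‖ := by ring
      _ ≤ ‖J‖ * ‖A v‖ + ‖v‖ / 2 := by nlinarith [norm_nonneg v]
  linarith

end Submodule

theorem ContinuousLinearMap.exists_inverse_of_norm_le_mul_norm_apply {𝕜 E : Type*}
    [NontriviallyNormedField 𝕜] [CompleteSpace 𝕜] [NormedAddCommGroup E] [NormedSpace 𝕜 E]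
    [FiniteDimensional 𝕜 E] (A : E →L[𝕜] E) {D : ℝ} (hD : 0 ≤ D) (h : ∀ v, ‖v‖ ≤ D * ‖A v‖) :
    ∃ B : E →L[𝕜] E, A.comp B = 1 ∧ B.comp A = 1 ∧ ‖B‖ ≤ D := by
  have hinj : Function.Injective (A : E →ₗ[𝕜] E) :=
    (injective_iff_map_eq_zero A).2 fun v hv => norm_le_zero_iff.1 (by simpa [hv] using h v)
  let Ainv := LinearEquiv.ofInjectiveEndo (A : E →ₗ[𝕜] E) hinj
  let B : E →L[𝕜] E := LinearMap.toContinuousLinearMap (Ainv.symm : E →ₗ[𝕜] E)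
  have hAB : ∀ v, A (B v) = v := Ainv.apply_symm_apply
  refine ⟨B, ContinuousLinearMap.ext hAB, ContinuousLinearMap.ext Ainv.symm_apply_apply, ?_⟩
  exact B.opNorm_le_bound hD fun v => by simpa [hAB] using h (B v)

/-- Let `K` be a compact operator on a Hilbert space `H` with `I + K` invertible, and
let `P n` be the orthogonal projection onto the span of the first `n` vectors of an
orthonormal basis.  Then there exist `C > 0` and `n₀` such that for all `n ≥ n₀` the
finite section `A_n = P_n (I + K) P_n` (as an operator on the range of `P_n`) is
invertible with `‖A_n‖ ≤ C` and `‖A_n⁻¹‖ ≤ C`. -/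
theorem finite_sections_uniformly_invertible
    (e : HilbertBasis ℕ ℂ H) (K : H →L[ℂ] H) (hK : IsCompactOperator K)
    (hinv : ∃ J : H →L[ℂ] H, J.comp (1 + K) = 1 ∧ (1 + K).comp J = 1) :
    ∃ C > 0, ∃ n₀ : ℕ, ∀ n ≥ n₀,
      ∃ B : firstNSpan e n →L[ℂ] firstNSpan e n,
        (finiteSection e K n).comp B = 1 ∧
        B.comp (finiteSection e K n) = 1 ∧
        ‖finiteSection e K n‖ ≤ C ∧ ‖B‖ ≤ C := by
  obtain ⟨J, hJ, -⟩ := hinv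
  have hsmall : ∀ᶠ n in atTop, ‖J‖ * ‖K - (firstNSpan e n).starProjection ∘L K‖ ≤ 1 / 2 := by
    have hlim := (tendsto_iff_norm_sub_tendsto_zero.1
      (tendsto_starProjection_firstNSpan_comp e hK)).const_mul ‖J‖
    simp only [norm_sub_rev, mul_zero] at hlim
    exact hlim.eventually (eventually_le_nhds one_half_pos)
  obtain ⟨n₀, hn₀⟩ := eventually_atTop.1 hsmall
  refine ⟨max ‖1 + K‖ (2 * ‖J‖) + 1, by positivity, n₀, fun n hn => ?_⟩
  obtain ⟨B, hAB, hBA, hB⟩ := (finiteSection e K n).exists_inverse_of_norm_le_mul_norm_apply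
    (by positivity) ((firstNSpan e n).norm_le_two_mul_norm_compression_one_add_apply hJ (hn₀ n hn))
  refine ⟨B, hAB, hBA, ?_, ?_⟩
  · exact ((firstNSpan e n).norm_compression_le _).trans
      (by linarith [le_max_left ‖1 + K‖ (2 * ‖J‖)])
  · linarith [le_max_right ‖1 + K‖ (2 * ‖J‖)]
end

section
/- Finite-section convergence: let H be a Hilbert space, K compact on H with I + K invertible, P_n orthogonal projections onto an increasing exhausting family of finite-dimensional subspaces, and b ∈ H. Define, for n large enough, u_n ∈ P_n H by (P_n (I+K) P_n) u_n = P_n (I+K) u where u = (I+K)^{-1}(I+K)u is the exact solution. Then ‖u − u_n‖ ≤ C ‖u − P_n u‖ for some constant C independent of n; in particular u_n → u. -/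
/-!
Céa's lemma for projection methods. Write `A = 1 + K`. Since `P n u - u_n` lies in the range of
`P n`, uniform stability of the finite sections and the Galerkin equation give
`‖P n u - u_n‖ ≤ C₀ ‖P n A (P n u - u)‖ ≤ C₀ ‖A‖ ‖u - P n u‖`, using that orthogonal projections
are contractions. The triangle inequality through `P n u` yields the quasi-optimal bound with
`C = 1 + C₀ ‖A‖`, and strong convergence `P n u → u` gives `u_n → u`.
-/

open Filter

section Galerkin

variable {𝕜 E : Type*} [NontriviallyNormedField 𝕜] [NormedAddCommGroup E] [NormedSpace 𝕜 E]

theorem norm_sub_le_of_galerkin {Q A : E →L[𝕜] E} (hQ : ‖Q‖ ≤ 1) {C₀ : ℝ} (hC₀ : 0 ≤ C₀)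
    (hstab : ∀ v ∈ LinearMap.range (Q : E →ₗ[𝕜] E), ‖v‖ ≤ C₀ * ‖Q (A v)‖)
    {u w : E} (hw : w ∈ LinearMap.range (Q : E →ₗ[𝕜] E)) (hgal : Q (A w) = Q (A u)) :
    ‖u - w‖ ≤ (1 + C₀ * ‖A‖) * ‖u - Q u‖ := by
  have hmem : Q u - w ∈ LinearMap.range (Q : E →ₗ[𝕜] E) :=
    Submodule.sub_mem _ (LinearMap.mem_range_self _ u) hw
  have hdefect : Q (A (Q u - w)) = Q (A (Q u - u)) := by
    simp only [map_sub, hgal]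
  have hQA : ‖Q (A (Q u - u))‖ ≤ ‖A‖ * ‖u - Q u‖ :=
    calc ‖Q (A (Q u - u))‖ ≤ ‖Q‖ * ‖A (Q u - u)‖ := Q.le_opNorm _
      _ ≤ 1 * (‖A‖ * ‖Q u - u‖) := by gcongr; exact A.le_opNorm _
      _ = ‖A‖ * ‖u - Q u‖ := by rw [one_mul, norm_sub_rev]
  calc ‖u - w‖ = ‖(u - Q u) + (Q u - w)‖ := by rw [sub_add_sub_cancel]
    _ ≤ ‖u - Q u‖ + ‖Q u - w‖ := norm_add_le _ _
    _ ≤ ‖u - Q u‖ + C₀ * (‖A‖ * ‖u - Q u‖) := by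
        gcongr
        exact (hstab _ hmem).trans (hdefect ▸ by gcongr)
    _ = (1 + C₀ * ‖A‖) * ‖u - Q u‖ := by ring

end Galerkin

theorem finite_section_convergence_general
    {H : Type*} [NormedAddCommGroup H] [InnerProductSpace ℂ H] [CompleteSpace H]
    (P : ℕ → H →L[ℂ] H)
    (hsa : ∀ n, IsSelfAdjoint (P n))
    (hidem : ∀ n, (P n).comp (P n) = P n)
    (hstrong : ∀ x : H, Tendsto (fun n => P n x) atTop (nhds x))
    (K : H →L[ℂ] H)
    (u : H)
    (n₀ : ℕ) (C₀ : ℝ) (hC₀ : 0 < C₀)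
    (hsec : ∀ n ≥ n₀, ∀ v ∈ LinearMap.range (P n : H →ₗ[ℂ] H), ‖v‖ ≤ C₀ * ‖P n ((1 + K) v)‖)
    (uN : ℕ → H)
    (huN : ∀ n, uN n ∈ LinearMap.range (P n : H →ₗ[ℂ] H))
    (hGalerkin : ∀ n, P n ((1 + K) (uN n)) = P n ((1 + K) u)) :
    (∃ C : ℝ, ∀ n ≥ n₀, ‖u - uN n‖ ≤ C * ‖u - P n u‖) ∧
      Tendsto uN atTop (nhds u) := by
  have hquasi : ∀ n ≥ n₀, ‖u - uN n‖ ≤ (1 + C₀ * ‖1 + K‖) * ‖u - P n u‖ := fun n hn =>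
    norm_sub_le_of_galerkin (IsStarProjection.norm_le _ ⟨hidem n, hsa n⟩) hC₀.le
      (hsec n hn) (huN n) (hGalerkin n)
  have hbest : Tendsto (fun n => (1 + C₀ * ‖1 + K‖) * ‖u - P n u‖) atTop (nhds 0) := by
    simpa using ((hstrong u).const_sub u).norm.const_mul (1 + C₀ * ‖1 + K‖)
  refine ⟨⟨_, hquasi⟩, tendsto_iff_norm_sub_tendsto_zero.mpr ?_⟩
  refine squeeze_zero' (Eventually.of_forall fun n => norm_nonneg _) ?_ hbest
  filter_upwards [eventually_ge_atTop n₀] with n hn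
  rw [norm_sub_rev]
  exact hquasi n hn

/-- Finite-section convergence: let `H` be a Hilbert space, `K` compact with `I + K`
invertible, `P n` orthogonal projections onto an increasing, exhausting family of
finite-dimensional subspaces, and let `u` solve `(I + K) u = f`.  If `u_n` in the range
of `P n` satisfies the Galerkin equation `P n (I + K) u_n = P n (I + K) u` and the finite
sections are uniformly invertible for `n ≥ n₀`, then
`‖u - u_n‖ ≤ C ‖u - P n u‖` for a constant `C` independent of `n`; in particular
`u_n → u`. -/
theorem finite_section_convergence
    {H : Type*} [NormedAddCommGroup H] [InnerProductSpace ℂ H] [CompleteSpace H]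
    (P : ℕ → H →L[ℂ] H)
    (hsa : ∀ n, IsSelfAdjoint (P n))
    (hidem : ∀ n, (P n).comp (P n) = P n)
    (hfd : ∀ n, FiniteDimensional ℂ (LinearMap.range (P n : H →ₗ[ℂ] H)))
    (hmono : Monotone fun n => LinearMap.range (P n : H →ₗ[ℂ] H))
    (hstrong : ∀ x : H, Tendsto (fun n => P n x) atTop (nhds x))
    (K : H →L[ℂ] H) (hK : IsCompactOperator K)
    (hinv : ∃ J : H →L[ℂ] H, J.comp (1 + K) = 1 ∧ (1 + K).comp J = 1)
    (f u : H) (hu : (1 + K) u = f)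
    (n₀ : ℕ) (C₀ : ℝ) (hC₀ : 0 < C₀)
    (hsec : ∀ n ≥ n₀, ∀ v ∈ LinearMap.range (P n : H →ₗ[ℂ] H), ‖v‖ ≤ C₀ * ‖P n ((1 + K) v)‖)
    (uN : ℕ → H)
    (huN : ∀ n, uN n ∈ LinearMap.range (P n : H →ₗ[ℂ] H))
    (hGalerkin : ∀ n, P n ((1 + K) (uN n)) = P n ((1 + K) u)) :
    (∃ C : ℝ, ∀ n ≥ n₀, ‖u - uN n‖ ≤ C * ‖u - P n u‖) ∧
      Tendsto uN atTop (nhds u) :=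
  finite_section_convergence_general P hsa hidem hstrong K u n₀ C₀ hC₀ hsec uN huN hGalerkin
end

section
/- Suppose u(x) = ∑_{k=0}^{n} u_k T_k(x) is a finite Chebyshev series and D_0, S_0 are the differentiation and conversion operators on coefficient sequences: (D_0 u)_k = (k+1) u_{k+1} and (S_0 u)_k = u_k/2 − u_{k+2}/2 for k ≥ 1 with (S_0 u)_0 = u_0 − u_2/2. Then the polynomial identity u'(x) + a(x)u(x), for a(x) = ∑ a_j T_j, has Chebyshev-U coefficient sequence D_0 u + S_0 M_0[a] u, where M_0[a] is the Chebyshev-T multiplication matrix. -/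
/-!
Differentiating term by term, `T_{k+1}' = (k+1) U_k` turns `u'` into the U-series with
coefficients `D_0 u`. For the product `a u = ∑ v_k T_k`, the identity `2 T_k = U_k - U_{k-2}`
(valid for all `k` once `U_{-1} = 0` and `U_{-2} = -1`) rewrites each `v_k T_k` in the U basis;
collecting coefficients gives `S_0 v`, and its `k = 0` row absorbs the `U_{-2}` term.
-/

open Polynomial Polynomial.Chebyshev Finset

theorem derivative_sum_C_mul_T {R : Type*} [CommRing R] (u : ℕ → R) (n : ℕ) :
    derivative (∑ k ∈ range (n + 1), Polynomial.C (u k) * T R k) =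
      ∑ k ∈ range n, Polynomial.C (((k : R) + 1) * u (k + 1)) * U R k := by
  rw [derivative_sum, sum_range_succ']
  simp only [Nat.cast_zero, T_zero, mul_one, derivative_C, add_zero, derivative_C_mul,
    T_derivative_eq_U, Polynomial.C_mul, Nat.cast_add, Nat.cast_one, add_sub_cancel_right]
  refine sum_congr rfl fun k _ => ?_
  simp only [Int.cast_add, Int.cast_natCast, Int.cast_one, map_add, map_natCast, map_one]
  ring

section Conversion

variable {R : Type*} [Field R] [NeZero (2 : R)]

theorem sum_conversion_mul_U_add_boundary (v : ℕ → R) (n : ℕ) :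
    ∑ k ∈ range (n + 1),
        Polynomial.C (if k = 0 then v 0 - v 2 / 2 else (v k - v (k + 2)) / 2) * U R k +
        Polynomial.C (v (n + 1) / 2) * U R ((n : ℤ) - 1) +
        Polynomial.C (v (n + 2) / 2) * U R n =
      ∑ k ∈ range (n + 1), Polynomial.C (v k) * T R k := by
  have C_half_mul_two (x : R) : Polynomial.C (x / 2) * 2 = Polynomial.C x := by
    rw [← Polynomial.C_ofNat, ← Polynomial.C_mul, div_mul_cancel₀ x two_ne_zero]
  induction n with
  | zero =>
    simp only [zero_add, range_one, sum_singleton, if_pos, Nat.cast_zero, U_zero, T_zero,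
      zero_sub, U_neg_one, map_sub]
    ring
  | succ n ih =>
    rw [sum_range_succ _ (n + 1), sum_range_succ (fun k => Polynomial.C (v k) * T R k) (n + 1),
      ← ih, if_neg n.succ_ne_zero, sub_div, map_sub]
    have two_mul_T := two_mul_T_eq_U_sub_U R ((n : ℤ) - 1)
    rw [show (n : ℤ) - 1 + 2 = ((n + 1 : ℕ) : ℤ) by push_cast; ring] at two_mul_T
    push_cast at two_mul_T ⊢
    simp only [add_sub_cancel_right]
    linear_combination
      -Polynomial.C (v (n + 1) / 2) * two_mul_T + T R (n + 1) * C_half_mul_two (v (n + 1))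

theorem sum_conversion_mul_U (v : ℕ → R) (n : ℕ) (hv : ∀ k, n ≤ k → v k = 0) :
    ∑ k ∈ range n,
        Polynomial.C (if k = 0 then v 0 - v 2 / 2 else (v k - v (k + 2)) / 2) * U R k =
      ∑ k ∈ range n, Polynomial.C (v k) * T R k := by
  cases n with
  | zero => simp
  | succ n =>
    rw [← sum_conversion_mul_U_add_boundary, hv (n + 1) le_rfl, hv (n + 2) (by omega)]
    simp

end Conversion

theorem first_order_operator_coefficients_general (N : ℕ) (u a v : ℕ → ℝ)
    (hu : ∀ k, N ≤ k → u k = 0) (hv : ∀ k, 2 * N ≤ k → v k = 0)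
    (hM : ∑ k ∈ range (2 * N), Polynomial.C (v k) * T ℝ k =
        (∑ j ∈ range N, Polynomial.C (a j) * T ℝ j) *
          (∑ k ∈ range N, Polynomial.C (u k) * T ℝ k)) :
    ∑ k ∈ range (2 * N), Polynomial.C
        (((k : ℝ) + 1) * u (k + 1) +
          (if k = 0 then v 0 - v 2 / 2 else (v k - v (k + 2)) / 2)) * U ℝ k =
      derivative (∑ k ∈ range N, Polynomial.C (u k) * T ℝ k) +
        (∑ j ∈ range N, Polynomial.C (a j) * T ℝ j) *
          (∑ k ∈ range N, Polynomial.C (u k) * T ℝ k) := by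
  have u_series_eq : ∑ k ∈ range N, Polynomial.C (u k) * T ℝ k =
      ∑ k ∈ range (2 * N + 1), Polynomial.C (u k) * T ℝ k :=
    sum_subset (range_subset_range.2 (by omega)) fun k _ hk => by
      rw [hu k (by simpa using hk), map_zero, zero_mul]
  simp only [map_add, add_mul (Polynomial.C _), sum_add_distrib]
  rw [sum_conversion_mul_U v _ hv, hM, u_series_eq, derivative_sum_C_mul_T]

/-- Discretization of `u' + a u`: let `u`, `a` be coefficient sequences vanishing from
index `N` on, let `v = M_0[a] u` be the Chebyshev product coefficients (characterized by
`∑ v_k T_k = (∑ a_j T_j)(∑ u_k T_k)`, with `v` also vanishing from `N` on), and let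
`D_0 u` and `S_0 v` be given by `(D_0 u)_k = (k+1) u_{k+1}`, `(S_0 v)_0 = v_0 - v_2/2`,
`(S_0 v)_k = (v_k - v_{k+2})/2` for `k ≥ 1`.  Then the Chebyshev-U series with
coefficients `D_0 u + S_0 M_0[a] u` equals the polynomial `u'(x) + a(x) u(x)`. -/
theorem first_order_operator_coefficients (N : ℕ) (u a v : ℕ → ℝ)
    (hu : ∀ k, N ≤ k → u k = 0) (ha : ∀ k, N ≤ k → a k = 0) (hv : ∀ k, 2 * N ≤ k → v k = 0)
    (hM : ∑ k ∈ range (2 * N), Polynomial.C (v k) * T ℝ k =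
        (∑ j ∈ range N, Polynomial.C (a j) * T ℝ j) *
          (∑ k ∈ range N, Polynomial.C (u k) * T ℝ k)) :
    ∑ k ∈ range (2 * N), Polynomial.C
        (((k : ℝ) + 1) * u (k + 1) +
          (if k = 0 then v 0 - v 2 / 2 else (v k - v (k + 2)) / 2)) * U ℝ k =
      derivative (∑ k ∈ range N, Polynomial.C (u k) * T ℝ k) +
        (∑ j ∈ range N, Polynomial.C (a j) * T ℝ j) *
          (∑ k ∈ range N, Polynomial.C (u k) * T ℝ k) :=
  first_order_operator_coefficients_general N u a v hu hv hM
end
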